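/- arXiv:1911.07626 — 5 statements merged into one kernel-verified Lean document; each statement's English description precedes it below -/
import Mathlib

section
/- Neural feature repopulation (Theorem 3, weight-kernel form): For ℓ = 1,…,L let ρ₀^(ℓ) be a probability measure on Z^(ℓ) mutually absolutely continuous with ρ^(ℓ), and fix versions of the densities p^(ℓ) = dρ^(ℓ)/dρ₀^(ℓ) with 0 < p^(ℓ) < ∞ everywhere; set p^(0) ≡ 1. Define the repopulated weights w̃^(ℓ)(z,ζ) = w^(ℓ)(z,ζ) · p^(ℓ−1)(ζ) and ũ(z) = u(z) · p^(L)(z), and let f̃^(ℓ) and f̃ denote the layer functions and output computed from the measures ρ₀^(ℓ), kernels w̃^(ℓ) and top weights ũ. Then: (i) f̃^(ℓ)(z;x) = f^(ℓ)(z;x) for every ℓ, z, x, and f̃(x) = f(x) for every x; (ii) for measurable r₁, r₂ : ℝ → ℝ and r^(u) : ℝ^K → ℝ and every ℓ, ∫ r₂( ∫ r₁( w^(ℓ)(z,ζ) ) dρ^(ℓ)(z) ) dρ^(ℓ−1)(ζ) = ∫ r₂( ∫ r₁( w̃^(ℓ)(z,ζ) / p^(ℓ−1)(ζ) ) p^(ℓ)(z)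 dρ₀^(ℓ)(z) ) p^(ℓ−1)(ζ) dρ₀^(ℓ−1)(ζ), and ∫ r^(u)( u(z) ) dρ^(L)(z) = ∫ r^(u)( ũ(z) / p^(L)(z) ) p^(L)(z) dρ₀^(L)(z), whenever these integrals are absolutely convergent. -/
/-!
Since `ρ^(ℓ) = p^(ℓ) ρ₀^(ℓ)`, integrating any function against `ρ^(ℓ)` is the same as integrating
`p^(ℓ)` times it against `ρ₀^(ℓ)`. The repopulated kernel `w̃^(ℓ)(z, ζ) = w^(ℓ)(z, ζ) p^(ℓ−1)(ζ)`
carries exactly this factor, so by induction over the layers every pre-activation, hence every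
layer function and the output, is unchanged; the regularizer identities are the same change of
density applied to the inner and the outer integral.
-/

open MeasureTheory
open scoped ENNReal NNReal BigOperators

/-- Node space of a DNN: layer `0` is the input index set `Fin d`; for `ℓ ≥ 0`,
`Node d Z (ℓ+1) = Z ℓ` is the node space of hidden layer `ℓ+1`. -/
def Node (d : ℕ) (Z : ℕ → Type) : ℕ → Type
  | 0 => Fin d
  | ℓ + 1 => Z ℓ

instance nodeMeasurableSpace (d : ℕ) (Z : ℕ → Type) [∀ ℓ, MeasurableSpace (Z ℓ)] :
    ∀ ℓ, MeasurableSpace (Node d Z ℓ)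
  | 0 => inferInstanceAs (MeasurableSpace (Fin d))
  | ℓ + 1 => inferInstanceAs (MeasurableSpace (Z ℓ))

variable {d : ℕ} {Z : ℕ → Type} [∀ ℓ, MeasurableSpace (Z ℓ)]

/-- The layer functions `f^{(ℓ)}(·;x)` of the continuous DNN. -/
noncomputable def ffun (ρ : ∀ ℓ, Measure (Z ℓ))
    (w : ∀ ℓ : ℕ, Node d Z (ℓ + 1) → Node d Z ℓ → ℝ)
    (hact : ℕ → ℝ → ℝ) (x : Fin d → ℝ) : (ℓ : ℕ) → Node d Z ℓ → ℝ
  | 0, ζ => x ζ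
  | 1, z => hact 1 ((d : ℝ)⁻¹ * ∑ j : Fin d, w 0 z j * x j)
  | ℓ + 2, z => hact (ℓ + 2) (∫ ζ, w (ℓ + 1) z ζ * ffun ρ w hact x (ℓ + 1) ζ ∂(ρ ℓ))

/-- `gfun ρ w hact x ℓ` is the pre-activation `g^{(ℓ+1)}(·;x)` of the continuous DNN. -/
noncomputable def gfun (ρ : ∀ ℓ, Measure (Z ℓ))
    (w : ∀ ℓ : ℕ, Node d Z (ℓ + 1) → Node d Z ℓ → ℝ)
    (hact : ℕ → ℝ → ℝ) (x : Fin d → ℝ) : (ℓ : ℕ) → Node d Z (ℓ + 1) → ℝ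
  | 0, z => (d : ℝ)⁻¹ * ∑ j : Fin d, w 0 z j * x j
  | ℓ + 1, z => ∫ ζ, w (ℓ + 1) z ζ * ffun ρ w hact x (ℓ + 1) ζ ∂(ρ ℓ)

/-- Output `f(x)` of the continuous DNN with `L = Lp + 1` hidden layers. -/
noncomputable def fout (Lp K : ℕ) (ρ : ∀ ℓ, Measure (Z ℓ))
    (w : ∀ ℓ : ℕ, Node d Z (ℓ + 1) → Node d Z ℓ → ℝ)
    (hact : ℕ → ℝ → ℝ) (u : Z Lp → EuclideanSpace ℝ (Fin K)) (x : Fin d → ℝ) :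
    EuclideanSpace ℝ (Fin K) :=
  ∫ z, ffun ρ w hact x (Lp + 1) z • u z ∂(ρ Lp)


/-- Density at the node level: `p^{(0)} ≡ 1` on the input layer, and `p^{(ℓ+1)} = p ℓ`
on hidden layer `ℓ+1`. -/
def pNode (d : ℕ) {Z : ℕ → Type} (p : ∀ ℓ, Z ℓ → ℝ) : ∀ ℓ, Node d Z ℓ → ℝ
  | 0 => fun _ => 1
  | ℓ + 1 => p ℓ

/-- Measures at the node level: the uniform probability measure on `Fin d` at layer `0`,
and `ρ ℓ` on hidden layer `ℓ+1`. -/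
noncomputable def nodeMeasure (d : ℕ) {Z : ℕ → Type} [∀ ℓ, MeasurableSpace (Z ℓ)]
    (ρ : ∀ ℓ, Measure (Z ℓ)) : ∀ ℓ, Measure (Node d Z ℓ)
  | 0 => ((d : ℝ≥0∞)⁻¹ • Measure.count : Measure (Fin d))
  | ℓ + 1 => ρ ℓ

lemma integral_withDensity_ofReal_eq_integral_smul {α E : Type*} [MeasurableSpace α]
    [NormedAddCommGroup E] [NormedSpace ℝ E] (μ : Measure α) {p : α → ℝ} (hp : Measurable p)
    (hp_nonneg : ∀ a, 0 ≤ p a) (g : α → E) :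
    ∫ a, g a ∂μ.withDensity (fun a => ENNReal.ofReal (p a)) = ∫ a, p a • g a ∂μ := by
  rw [integral_withDensity_eq_integral_toReal_smul hp.ennreal_ofReal
    (ae_of_all _ fun _ => ENNReal.ofReal_lt_top)]
  simp only [ENNReal.toReal_ofReal (hp_nonneg _)]

lemma pNode_pos {Y : ℕ → Type} {p : ∀ ℓ, Y ℓ → ℝ} (hp : ∀ ℓ y, 0 < p ℓ y) :
    ∀ (t : ℕ) (ζ : Node d Y t), 0 < pNode d p t ζ
  | 0, _ => one_pos
  | t + 1, ζ => hp t ζ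

section Repopulation

variable {ρ ρ₀ : ∀ ℓ, Measure (Z ℓ)} {p : ∀ ℓ, Z ℓ → ℝ}
  {w wT : ∀ ℓ : ℕ, Node d Z (ℓ + 1) → Node d Z ℓ → ℝ}

lemma integral_nodeMeasure_eq_integral_mul_pNode (hpmeas : ∀ ℓ, Measurable (p ℓ))
    (hp_nonneg : ∀ ℓ z, 0 ≤ p ℓ z)
    (hdens : ∀ ℓ, ρ ℓ = (ρ₀ ℓ).withDensity fun z => ENNReal.ofReal (p ℓ z)) :
    ∀ (t : ℕ) (g : Node d Z t → ℝ),
      ∫ ζ, g ζ ∂(nodeMeasure d ρ t) = ∫ ζ, g ζ * pNode d p t ζ ∂(nodeMeasure d ρ₀ t)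
  | 0, g => by simp only [pNode, mul_one]; rfl
  | t + 1, g => by
    rw [show nodeMeasure d ρ (t + 1) = ρ t from rfl, hdens t]
    exact (integral_withDensity_ofReal_eq_integral_smul _ (hpmeas t) (hp_nonneg t) g).trans
      (integral_congr_ae (ae_of_all _ fun ζ => mul_comm _ _))

theorem ffun_repopulate (hpmeas : ∀ ℓ, Measurable (p ℓ)) (hp_nonneg : ∀ ℓ z, 0 ≤ p ℓ z)
    (hdens : ∀ ℓ, ρ ℓ = (ρ₀ ℓ).withDensity fun z => ENNReal.ofReal (p ℓ z))
    (hwT : ∀ ℓ z ζ, wT ℓ z ζ = w ℓ z ζ * pNode d p ℓ ζ) (hact : ℕ → ℝ → ℝ) (x : Fin d → ℝ) :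
    ∀ (ℓ : ℕ) (z : Node d Z ℓ), ffun ρ₀ wT hact x ℓ z = ffun ρ w hact x ℓ z
  | 0, _ => rfl
  | 1, z => by
    simp only [ffun]
    congr
    funext j
    simp only [hwT 0 z j, pNode, mul_one]
  | m + 2, z => by
    have hprev := ffun_repopulate hpmeas hp_nonneg hdens hwT hact x (m + 1)
    rw [ffun, ffun]
    congr 1
    calc ∫ ζ, wT (m + 1) z ζ * ffun ρ₀ wT hact x (m + 1) ζ ∂nodeMeasure d ρ₀ (m + 1)
        = ∫ ζ, w (m + 1) z ζ * ffun ρ w hact x (m + 1) ζ * pNode d p (m + 1) ζ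
            ∂nodeMeasure d ρ₀ (m + 1) :=
          integral_congr_ae <| ae_of_all _ fun ζ => by dsimp only; rw [hwT, hprev]; ring
      _ = ∫ ζ, w (m + 1) z ζ * ffun ρ w hact x (m + 1) ζ ∂nodeMeasure d ρ (m + 1) :=
          (integral_nodeMeasure_eq_integral_mul_pNode hpmeas hp_nonneg hdens (m + 1) _).symm

theorem fout_repopulate {Lp K : ℕ} (hpmeas : ∀ ℓ, Measurable (p ℓ))
    (hp_nonneg : ∀ ℓ z, 0 ≤ p ℓ z)
    (hdens : ∀ ℓ, ρ ℓ = (ρ₀ ℓ).withDensity fun z => ENNReal.ofReal (p ℓ z))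
    (hwT : ∀ ℓ z ζ, wT ℓ z ζ = w ℓ z ζ * pNode d p ℓ ζ) (hact : ℕ → ℝ → ℝ)
    {u uT : Z Lp → EuclideanSpace ℝ (Fin K)} (huT : ∀ z, uT z = p Lp z • u z)
    (x : Fin d → ℝ) :
    fout Lp K ρ₀ wT hact uT x = fout Lp K ρ w hact u x := by
  rw [fout, fout, hdens Lp,
    integral_withDensity_ofReal_eq_integral_smul _ (hpmeas Lp) (hp_nonneg Lp)]
  refine integral_congr_ae (ae_of_all _ fun z => ?_)
  dsimp only
  rw [ffun_repopulate hpmeas hp_nonneg hdens hwT hact x (Lp + 1) z, huT, smul_comm, smul_smul]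

lemma integral_comp_weight_repopulate (hpmeas : ∀ ℓ, Measurable (p ℓ))
    (hppos : ∀ ℓ z, 0 < p ℓ z)
    (hdens : ∀ ℓ, ρ ℓ = (ρ₀ ℓ).withDensity fun z => ENNReal.ofReal (p ℓ z))
    (hwT : ∀ ℓ z ζ, wT ℓ z ζ = w ℓ z ζ * pNode d p ℓ ζ) (r : ℝ → ℝ) (t : ℕ)
    (ζ : Node d Z t) :
    ∫ z : Z t, r (w t z ζ) ∂(ρ t) = ∫ z : Z t, r (wT t z ζ / pNode d p t ζ) * p t z ∂(ρ₀ t) := by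
  rw [hdens t,
    integral_withDensity_ofReal_eq_integral_smul _ (hpmeas t) fun z => (hppos t z).le]
  refine integral_congr_ae (ae_of_all _ fun z => ?_)
  dsimp only
  rw [hwT t z ζ, mul_div_cancel_right₀ _ (pNode_pos hppos t ζ).ne', smul_eq_mul, mul_comm]

theorem integral_weight_regularizer_repopulate (hpmeas : ∀ ℓ, Measurable (p ℓ))
    (hppos : ∀ ℓ z, 0 < p ℓ z)
    (hdens : ∀ ℓ, ρ ℓ = (ρ₀ ℓ).withDensity fun z => ENNReal.ofReal (p ℓ z))
    (hwT : ∀ ℓ z ζ, wT ℓ z ζ = w ℓ z ζ * pNode d p ℓ ζ) (r₁ r₂ : ℝ → ℝ) (t : ℕ) :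
    ∫ ζ, r₂ (∫ z : Z t, r₁ (w t z ζ) ∂(ρ t)) ∂(nodeMeasure d ρ t) =
      ∫ ζ, r₂ (∫ z : Z t, r₁ (wT t z ζ / pNode d p t ζ) * p t z ∂(ρ₀ t)) * pNode d p t ζ
        ∂(nodeMeasure d ρ₀ t) := by
  rw [integral_nodeMeasure_eq_integral_mul_pNode hpmeas (fun ℓ z => (hppos ℓ z).le) hdens t]
  refine integral_congr_ae (ae_of_all _ fun ζ => ?_)
  dsimp only
  rw [integral_comp_weight_repopulate hpmeas hppos hdens hwT r₁ t ζ]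

lemma integral_comp_repopulate (hpmeas : ∀ ℓ, Measurable (p ℓ)) (hppos : ∀ ℓ z, 0 < p ℓ z)
    (hdens : ∀ ℓ, ρ ℓ = (ρ₀ ℓ).withDensity fun z => ENNReal.ofReal (p ℓ z))
    {ℓ : ℕ} {E : Type*} [NormedAddCommGroup E] [NormedSpace ℝ E] {u uT : Z ℓ → E}
    (huT : ∀ z, uT z = p ℓ z • u z) (r : E → ℝ) :
    ∫ z, r (u z) ∂(ρ ℓ) = ∫ z, r ((p ℓ z)⁻¹ • uT z) * p ℓ z ∂(ρ₀ ℓ) := by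
  rw [hdens ℓ,
    integral_withDensity_ofReal_eq_integral_smul _ (hpmeas ℓ) fun z => (hppos ℓ z).le]
  refine integral_congr_ae (ae_of_all _ fun z => ?_)
  dsimp only
  rw [huT, inv_smul_smul₀ (hppos ℓ z).ne', smul_eq_mul, mul_comm]

end Repopulation

theorem neural_feature_repopulation_general
    (Lp d K : ℕ)
    (Z : ℕ → Type) [∀ ℓ, MeasurableSpace (Z ℓ)]
    (ρ ρ₀ : ∀ ℓ, Measure (Z ℓ))
    (w : ∀ ℓ : ℕ, Node d Z (ℓ + 1) → Node d Z ℓ → ℝ)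
    (hact : ℕ → ℝ → ℝ)
    (u : Z Lp → EuclideanSpace ℝ (Fin K))
    -- fixed versions of the densities `p^{(ℓ)} = dρ^{(ℓ)}/dρ₀^{(ℓ)}`, `0 < p < ∞`
    (p : ∀ ℓ, Z ℓ → ℝ) (hpmeas : ∀ ℓ, Measurable (p ℓ)) (hppos : ∀ ℓ z, 0 < p ℓ z)
    (hdens : ∀ ℓ, ρ ℓ = (ρ₀ ℓ).withDensity fun z => ENNReal.ofReal (p ℓ z))
    -- the repopulated weights
    (wT : ∀ ℓ : ℕ, Node d Z (ℓ + 1) → Node d Z ℓ → ℝ)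
    (hwT : ∀ ℓ (z : Node d Z (ℓ + 1)) (ζ : Node d Z ℓ),
      wT ℓ z ζ = w ℓ z ζ * pNode d p ℓ ζ)
    (uT : Z Lp → EuclideanSpace ℝ (Fin K))
    (huT : ∀ z, uT z = p Lp z • u z) :
    -- (i) equality of layer functions and outputs
    ((∀ (x : Fin d → ℝ) (ℓ : ℕ), ℓ ≤ Lp + 1 → ∀ z : Node d Z ℓ,
        ffun ρ₀ wT hact x ℓ z = ffun ρ w hact x ℓ z) ∧
      ∀ x : Fin d → ℝ, fout Lp K ρ₀ wT hact uT x = fout Lp K ρ w hact u x) ∧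
    -- (ii) change-of-density formula for the regularizers
    (∀ (r₁ r₂ : ℝ → ℝ) (ru : EuclideanSpace ℝ (Fin K) → ℝ),
      Measurable r₁ → Measurable r₂ → Measurable ru →
      (∀ t : ℕ, t ≤ Lp →
        (∀ ζ : Node d Z t, Integrable (fun z : Z t => r₁ (w t z ζ)) (ρ t)) →
        Integrable (fun ζ : Node d Z t => r₂ (∫ z : Z t, r₁ (w t z ζ) ∂(ρ t)))
          (nodeMeasure d ρ t) →
        ∫ ζ : Node d Z t, r₂ (∫ z : Z t, r₁ (w t z ζ) ∂(ρ t)) ∂(nodeMeasure d ρ t) =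
          ∫ ζ : Node d Z t,
            r₂ (∫ z : Z t, r₁ (wT t z ζ / pNode d p t ζ) * p t z ∂(ρ₀ t)) *
              pNode d p t ζ ∂(nodeMeasure d ρ₀ t)) ∧
      (Integrable (fun z : Z Lp => ru (u z)) (ρ Lp) →
        ∫ z : Z Lp, ru (u z) ∂(ρ Lp) =
          ∫ z : Z Lp, ru ((p Lp z)⁻¹ • uT z) * p Lp z ∂(ρ₀ Lp))) := by
  have hp_nonneg : ∀ ℓ z, 0 ≤ p ℓ z := fun ℓ z => (hppos ℓ z).le
  exact ⟨⟨fun x ℓ _ => ffun_repopulate hpmeas hp_nonneg hdens hwT hact x ℓ,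
      fout_repopulate hpmeas hp_nonneg hdens hwT hact huT⟩,
    fun r₁ r₂ ru _ _ _ =>
      ⟨fun t _ _ _ => integral_weight_regularizer_repopulate hpmeas hppos hdens hwT r₁ r₂ t,
        fun _ => integral_comp_repopulate hpmeas hppos hdens huT ru⟩⟩

/-- **Neural feature repopulation** (Theorem 3, weight-kernel form).  Given base
probability measures `ρ₀^{(ℓ)}` mutually absolutely continuous with `ρ^{(ℓ)}` with
everywhere finite positive densities `p^{(ℓ)} = dρ^{(ℓ)}/dρ₀^{(ℓ)}` (and `p^{(0)} ≡ 1`),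
the repopulated network with weights `w̃^{(ℓ)}(z,ζ) = w^{(ℓ)}(z,ζ) p^{(ℓ−1)}(ζ)` and top
weights `ũ = u · p^{(L)}` computes the same layer functions and output, and the
regularizer integrals transform by the change-of-density formula. -/
theorem neural_feature_repopulation
    (Lp d K : ℕ) (hd : 1 ≤ d) (hK : 1 ≤ K)
    (Z : ℕ → Type) [∀ ℓ, MeasurableSpace (Z ℓ)]
    (ρ ρ₀ : ∀ ℓ, Measure (Z ℓ))
    [∀ ℓ, IsProbabilityMeasure (ρ ℓ)] [∀ ℓ, IsProbabilityMeasure (ρ₀ ℓ)]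
    (w : ∀ ℓ : ℕ, Node d Z (ℓ + 1) → Node d Z ℓ → ℝ)
    (hwmeas : ∀ ℓ, Measurable fun q : Node d Z (ℓ + 1) × Node d Z ℓ => w ℓ q.1 q.2)
    (hact : ℕ → ℝ → ℝ) (hhmeas : ∀ ℓ, Measurable (hact ℓ))
    (u : Z Lp → EuclideanSpace ℝ (Fin K)) (humeas : Measurable u)
    -- fixed versions of the densities `p^{(ℓ)} = dρ^{(ℓ)}/dρ₀^{(ℓ)}`, `0 < p < ∞`
    (p : ∀ ℓ, Z ℓ → ℝ) (hpmeas : ∀ ℓ, Measurable (p ℓ)) (hppos : ∀ ℓ z, 0 < p ℓ z)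
    (hdens : ∀ ℓ, ρ ℓ = (ρ₀ ℓ).withDensity fun z => ENNReal.ofReal (p ℓ z))
    -- absolute convergence of the integrals defining the original network
    (hint₁ : ∀ (x : Fin d → ℝ) (t : ℕ) (z : Z (t + 1)),
      Integrable (fun ζ : Z t => w (t + 1) z ζ * ffun ρ w hact x (t + 1) ζ) (ρ t))
    (hint₂ : ∀ x : Fin d → ℝ,
      Integrable (fun z : Z Lp => ffun ρ w hact x (Lp + 1) z • u z) (ρ Lp))
    -- the repopulated weights
    (wT : ∀ ℓ : ℕ, Node d Z (ℓ + 1) → Node d Z ℓ → ℝ)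
    (hwT : ∀ ℓ (z : Node d Z (ℓ + 1)) (ζ : Node d Z ℓ),
      wT ℓ z ζ = w ℓ z ζ * pNode d p ℓ ζ)
    (uT : Z Lp → EuclideanSpace ℝ (Fin K))
    (huT : ∀ z, uT z = p Lp z • u z) :
    -- (i) equality of layer functions and outputs
    ((∀ (x : Fin d → ℝ) (ℓ : ℕ), ℓ ≤ Lp + 1 → ∀ z : Node d Z ℓ,
        ffun ρ₀ wT hact x ℓ z = ffun ρ w hact x ℓ z) ∧
      ∀ x : Fin d → ℝ, fout Lp K ρ₀ wT hact uT x = fout Lp K ρ w hact u x) ∧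
    -- (ii) change-of-density formula for the regularizers
    (∀ (r₁ r₂ : ℝ → ℝ) (ru : EuclideanSpace ℝ (Fin K) → ℝ),
      Measurable r₁ → Measurable r₂ → Measurable ru →
      (∀ t : ℕ, t ≤ Lp →
        (∀ ζ : Node d Z t, Integrable (fun z : Z t => r₁ (w t z ζ)) (ρ t)) →
        Integrable (fun ζ : Node d Z t => r₂ (∫ z : Z t, r₁ (w t z ζ) ∂(ρ t)))
          (nodeMeasure d ρ t) →
        ∫ ζ : Node d Z t, r₂ (∫ z : Z t, r₁ (w t z ζ) ∂(ρ t)) ∂(nodeMeasure d ρ t) =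
          ∫ ζ : Node d Z t,
            r₂ (∫ z : Z t, r₁ (wT t z ζ / pNode d p t ζ) * p t z ∂(ρ₀ t)) *
              pNode d p t ζ ∂(nodeMeasure d ρ₀ t)) ∧
      (Integrable (fun z : Z Lp => ru (u z)) (ρ Lp) →
        ∫ z : Z Lp, ru (u z) ∂(ρ Lp) =
          ∫ z : Z Lp, ru ((p Lp z)⁻¹ • uT z) * p Lp z ∂(ρ₀ Lp))) :=
  neural_feature_repopulation_general Lp d K Z ρ ρ₀ w hact u p hpmeas hppos hdens wT hwT uT huT
end

section
/- Convexity of the repopulated objective with ℓ_{1,2} regularization (Theorem 5): Let D be a probability measure on ℝ^d × Y (Y a measurable space) and φ : ℝ^K × Y → ℝ a loss function convex in its first argument. Build the continuous DNN from fixed base probability measures ρ₀^(0),…,ρ₀^(L) and fixed kernels w^(ℓ), so that F(z;x) := f^(L)(z;x) is a fixed jointly measurable function. For measurable ũ : Z^(L) → ℝ^K and measurable densities p^(ℓ) : Z^(ℓ) → (0,∞), ℓ = 1,…,L (with p^(0) ≡ 1), and nonnegative constants λ^(1),…,λ^(L), λ^(u), define Q̆(p^(1),…,p^(L), ũ) =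 E_{(x,y)~D} φ( ∫ ũ(z) F(z;x) dρ₀^(L)(z), y ) + λ^(u) ∫ ‖ũ(z)‖² / p^(L)(z) dρ₀^(L)(z) + Σ_{ℓ=1}^{L} λ^(ℓ) ∫ ( ∫ |w^(ℓ)(z,ζ)| p^(ℓ)(z) dρ₀^(ℓ)(z) )² / p^(ℓ−1)(ζ) dρ₀^(ℓ−1)(ζ), with the regularizer integrals taken in [0,∞] and the loss term assumed well defined. Then Q̆ is jointly convex in (p^(1),…,p^(L), ũ) on the convex set of tuples with each p^(ℓ) everywhere positive: for any two such tuples and θ ∈ [0,1], Q̆ at the convex combination is at most the convex combination of the values. -/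
open MeasureTheory
open scoped ENNReal NNReal BigOperators

variable {d : ℕ} {Z : ℕ → Type} [∀ ℓ, MeasurableSpace (Z ℓ)]

/-- Loss term `E_{(x,y)∼D} φ(∫ ũ(z) f^{(L)}(z;x) dρ₀^{(L)}(z), y)` of the repopulated
objective. -/
noncomputable def lossTerm (Lp d K : ℕ) {Z : ℕ → Type} [∀ ℓ, MeasurableSpace (Z ℓ)]
    (ρ₀ : ∀ ℓ, Measure (Z ℓ))
    (w : ∀ ℓ : ℕ, Node d Z (ℓ + 1) → Node d Z ℓ → ℝ)
    (hact : ℕ → ℝ → ℝ) {Y : Type} [MeasurableSpace Y]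
    (D : Measure ((Fin d → ℝ) × Y)) (φ : EuclideanSpace ℝ (Fin K) → Y → ℝ)
    (ut : Z Lp → EuclideanSpace ℝ (Fin K)) : ℝ :=
  ∫ q, φ (∫ z, ffun ρ₀ w hact q.1 (Lp + 1) z • ut z ∂(ρ₀ Lp)) q.2 ∂D

/-- The `ℓ_{1,2}` repopulated regularizer, expressed through the densities
`q^{(ℓ)} = dρ̃^{(ℓ)}/dρ₀^{(ℓ)}` (with `q^{(0)} ≡ 1`), valued in `[0,∞]`. -/
noncomputable def regTerm12 (Lp d : ℕ) (K : ℕ) {Z : ℕ → Type} [∀ ℓ, MeasurableSpace (Z ℓ)]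
    (ρ₀ : ∀ ℓ, Measure (Z ℓ))
    (w : ∀ ℓ : ℕ, Node d Z (ℓ + 1) → Node d Z ℓ → ℝ)
    (lam : ℕ → ℝ) (lamu : ℝ)
    (q : ∀ ℓ, Node d Z ℓ → ℝ) (ut : Z Lp → EuclideanSpace ℝ (Fin K)) : ℝ≥0∞ :=
  ENNReal.ofReal lamu *
      ∫⁻ z : Z Lp, ENNReal.ofReal (‖ut z‖ ^ 2 / q (Lp + 1) z) ∂(ρ₀ Lp) +
    ∑ t ∈ Finset.range (Lp + 1), ENNReal.ofReal (lam (t + 1)) *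
      ∫⁻ ζ : Node d Z t,
        (∫⁻ z : Z t, ENNReal.ofReal (|w t z ζ| * q (t + 1) z) ∂(ρ₀ t)) ^ 2 /
          ENNReal.ofReal (q t ζ) ∂(nodeMeasure d ρ₀ t)

/-! Every summand of the objective is convex in the tuple. The loss is a convex function composed
with the linear map `ũ ↦ ∫ ũ F dρ₀`, integrated against `D`. Each regularizer term integrates the
perspective `(x, σ) ↦ x² / σ` of the square, which is jointly convex on `ℝ × (0, ∞)` and
nondecreasing in `x ≥ 0`, evaluated at `(‖ũ‖, p^{(L)})` or at `(∫ |w^{(ℓ)}| p^{(ℓ)}, p^{(ℓ-1)})`;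
the first coordinate is a seminorm or a linear map of the tuple and the second is linear. -/

theorem sq_add_div_add_le {a b x y σ τ : ℝ} (ha : 0 ≤ a) (hb : 0 ≤ b) (hσ : 0 < σ) (hτ : 0 < τ) :
    (a * x + b * y) ^ 2 / (a * σ + b * τ) ≤ a * (x ^ 2 / σ) + b * (y ^ 2 / τ) := by
  rcases (add_nonneg (mul_nonneg ha hσ.le) (mul_nonneg hb hτ.le)).eq_or_lt with hden | hden
  · rw [← hden, div_zero]; positivity
  have hgap : a * (x ^ 2 / σ) + b * (y ^ 2 / τ) - (a * x + b * y) ^ 2 / (a * σ + b * τ) =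
      a * b * (x * τ - y * σ) ^ 2 / (σ * τ * (a * σ + b * τ)) := by
    field_simp
    ring
  have : 0 ≤ a * b * (x * τ - y * σ) ^ 2 / (σ * τ * (a * σ + b * τ)) := by positivity
  linarith

theorem ENNReal.ofReal_mul_add_mul_le {a b : ℝ} (ha : 0 ≤ a) (hb : 0 ≤ b) (s t : ℝ) :
    ENNReal.ofReal (a * s + b * t) ≤
      ENNReal.ofReal a * ENNReal.ofReal s + ENNReal.ofReal b * ENNReal.ofReal t := by
  rw [← ENNReal.ofReal_mul ha, ← ENNReal.ofReal_mul hb]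
  exact ENNReal.ofReal_add_le

theorem norm_smul_add_smul_sq_div_le {E : Type*} [SeminormedAddCommGroup E] [NormedSpace ℝ E]
    {a b σ τ : ℝ} (ha : 0 ≤ a) (hb : 0 ≤ b) (hσ : 0 < σ) (hτ : 0 < τ) (x y : E) :
    ‖a • x + b • y‖ ^ 2 / (a * σ + b * τ) ≤ a * (‖x‖ ^ 2 / σ) + b * (‖y‖ ^ 2 / τ) := by
  have hnorm : ‖a • x + b • y‖ ≤ a * ‖x‖ + b * ‖y‖ := by
    simpa [norm_smul, abs_of_nonneg ha, abs_of_nonneg hb] using norm_add_le (a • x) (b • y)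
  calc ‖a • x + b • y‖ ^ 2 / (a * σ + b * τ) ≤ (a * ‖x‖ + b * ‖y‖) ^ 2 / (a * σ + b * τ) := by
        gcongr
    _ ≤ _ := sq_add_div_add_le ha hb hσ hτ

theorem ENNReal.sq_add_div_add_le {θ σ τ : ℝ} (hθ0 : 0 ≤ θ) (hθ1 : θ ≤ 1) (hσ : 0 < σ) (hτ : 0 < τ)
    (x y : ℝ≥0∞) :
    (ENNReal.ofReal θ * x + ENNReal.ofReal (1 - θ) * y) ^ 2 / ENNReal.ofReal (θ * σ + (1 - θ) * τ) ≤
      ENNReal.ofReal θ * (x ^ 2 / ENNReal.ofReal σ) +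
        ENNReal.ofReal (1 - θ) * (y ^ 2 / ENNReal.ofReal τ) := by
  rcases hθ0.eq_or_lt with rfl | hθpos
  · simp
  rcases hθ1.eq_or_lt with rfl | hθlt
  · simp
  have hθ : ENNReal.ofReal θ ≠ 0 := by simpa using hθpos
  have hθ' : ENNReal.ofReal (1 - θ) ≠ 0 := by simpa using hθlt
  rcases eq_or_ne x ⊤ with rfl | hx
  · simp [ENNReal.top_div_of_ne_top, ENNReal.mul_top hθ]
  rcases eq_or_ne y ⊤ with rfl | hy
  · simp [ENNReal.top_div_of_ne_top, ENNReal.mul_top hθ']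
  rw [← ENNReal.ofReal_toReal hx, ← ENNReal.ofReal_toReal hy]
  have hx0 := x.toReal_nonneg
  have hy0 := y.toReal_nonneg
  have hθ1' : 0 ≤ 1 - θ := sub_nonneg.2 hθ1
  convert ENNReal.ofReal_le_ofReal
    (_root_.sq_add_div_add_le (x := x.toReal) (y := y.toReal) hθ0 hθ1' hσ hτ) using 1
  · rw [ENNReal.ofReal_div_of_pos (by positivity), ENNReal.ofReal_pow (by positivity),
      ENNReal.ofReal_add (by positivity) (by positivity),
      ENNReal.ofReal_add (by positivity) (by positivity), ENNReal.ofReal_mul hθ0,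
      ENNReal.ofReal_mul hθ1', ENNReal.ofReal_mul hθ0, ENNReal.ofReal_mul hθ1']
  · rw [ENNReal.ofReal_add (by positivity) (by positivity), ENNReal.ofReal_mul hθ0,
      ENNReal.ofReal_mul hθ1', ENNReal.ofReal_div_of_pos hσ, ENNReal.ofReal_div_of_pos hτ,
      ENNReal.ofReal_pow hx0, ENNReal.ofReal_pow hy0]

theorem lintegral_le_mul_add_mul {α : Type*} [MeasurableSpace α] {μ : Measure α}
    {F f g : α → ℝ≥0∞} {a b : ℝ≥0∞} (hf : Measurable f) (hg : Measurable g)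
    (h : ∀ x, F x ≤ a * f x + b * g x) :
    ∫⁻ x, F x ∂μ ≤ a * ∫⁻ x, f x ∂μ + b * ∫⁻ x, g x ∂μ := by
  refine (lintegral_mono h).trans_eq ?_
  rw [lintegral_add_left (hf.const_mul a), lintegral_const_mul a hf, lintegral_const_mul b hg]

theorem EReal.coe_add_coe_ennreal_le_convex_combination {θ L L₁ L₂ : ℝ} {R R₁ R₂ : ℝ≥0∞}
    (hθ0 : 0 ≤ θ) (hθ1 : θ ≤ 1) (hL : L ≤ θ * L₁ + (1 - θ) * L₂)
    (hR : R ≤ ENNReal.ofReal θ * R₁ + ENNReal.ofReal (1 - θ) * R₂) :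
    (L : EReal) + R ≤ (θ : EReal) * (L₁ + R₁) + ((1 - θ : ℝ) : EReal) * (L₂ + R₂) := by
  have hθ1' : 0 ≤ 1 - θ := _root_.sub_nonneg.2 hθ1
  calc (L : EReal) + R
      ≤ ((θ * L₁ + (1 - θ) * L₂ : ℝ) : EReal) +
          ((ENNReal.ofReal θ * R₁ + ENNReal.ofReal (1 - θ) * R₂ : ℝ≥0∞) : EReal) :=
        add_le_add (EReal.coe_le_coe_iff.2 hL) (EReal.coe_ennreal_le_coe_ennreal_iff.2 hR)
    _ = _ := by
        rw [EReal.left_distrib_of_nonneg_of_ne_top (EReal.coe_nonneg.2 hθ0) (EReal.coe_ne_top _),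
          EReal.left_distrib_of_nonneg_of_ne_top (EReal.coe_nonneg.2 hθ1') (EReal.coe_ne_top _)]
        simp only [EReal.coe_add, EReal.coe_mul, EReal.coe_ennreal_add, EReal.coe_ennreal_mul,
          EReal.coe_ennreal_ofReal, max_eq_left hθ0, max_eq_left hθ1']
        abel

theorem integral_convexOn_integral_smul_le {X Y Ω E : Type*} [MeasurableSpace X]
    [MeasurableSpace Y] [MeasurableSpace Ω] [NormedAddCommGroup E] [NormedSpace ℝ E]
    (μ : Measure Ω) (D : Measure (X × Y)) (F : X → Ω → ℝ) {φ : E → Y → ℝ}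
    (hφ : ∀ y, ConvexOn ℝ Set.univ fun v => φ v y) {u₁ u₂ : Ω → E} {θ : ℝ}
    (hθ0 : 0 ≤ θ) (hθ1 : θ ≤ 1)
    (hu₁ : ∀ x, Integrable (fun z => F x z • u₁ z) μ)
    (hu₂ : ∀ x, Integrable (fun z => F x z • u₂ z) μ)
    (hI₁ : Integrable (fun q : X × Y => φ (∫ z, F q.1 z • u₁ z ∂μ) q.2) D)
    (hI₂ : Integrable (fun q : X × Y => φ (∫ z, F q.1 z • u₂ z ∂μ) q.2) D)
    (hIθ : Integrable (fun q : X × Y =>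
      φ (∫ z, F q.1 z • (θ • u₁ z + (1 - θ) • u₂ z) ∂μ) q.2) D) :
    ∫ q, φ (∫ z, F q.1 z • (θ • u₁ z + (1 - θ) • u₂ z) ∂μ) q.2 ∂D ≤
      θ * ∫ q, φ (∫ z, F q.1 z • u₁ z ∂μ) q.2 ∂D +
        (1 - θ) * ∫ q, φ (∫ z, F q.1 z • u₂ z ∂μ) q.2 ∂D := by
  have hθ1' : 0 ≤ 1 - θ := sub_nonneg.2 hθ1
  have hlin : ∀ x, ∫ z, F x z • (θ • u₁ z + (1 - θ) • u₂ z) ∂μ =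
      θ • ∫ z, F x z • u₁ z ∂μ + (1 - θ) • ∫ z, F x z • u₂ z ∂μ := by
    intro x
    simp only [smul_add, smul_comm (F x _) θ, smul_comm (F x _) (1 - θ)]
    have h₁ : Integrable (fun z => θ • (F x z • u₁ z)) μ := (hu₁ x).smul θ
    have h₂ : Integrable (fun z => (1 - θ) • (F x z • u₂ z)) μ := (hu₂ x).smul (1 - θ)
    rw [integral_add h₁ h₂, integral_smul, integral_smul]
  have hpt : ∀ q : X × Y, φ (∫ z, F q.1 z • (θ • u₁ z + (1 - θ) • u₂ z) ∂μ) q.2 ≤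
      θ * φ (∫ z, F q.1 z • u₁ z ∂μ) q.2 + (1 - θ) * φ (∫ z, F q.1 z • u₂ z ∂μ) q.2 := by
    intro q
    rw [hlin]
    exact (hφ q.2).2 (Set.mem_univ _) (Set.mem_univ _) hθ0 hθ1' (add_sub_cancel θ 1)
  calc _ ≤ ∫ q, (θ * φ (∫ z, F q.1 z • u₁ z ∂μ) q.2 +
          (1 - θ) * φ (∫ z, F q.1 z • u₂ z ∂μ) q.2) ∂D :=
        integral_mono hIθ ((hI₁.const_mul θ).add (hI₂.const_mul (1 - θ))) hpt
    _ = _ := by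
        rw [integral_add (hI₁.const_mul θ) (hI₂.const_mul (1 - θ)), integral_const_mul,
          integral_const_mul]

section Perspective

variable {α E : Type*} [MeasurableSpace α] {θ : ℝ}

theorem lintegral_sq_norm_div_convex [NormedAddCommGroup E] [NormedSpace ℝ E]
    [MeasurableSpace E] [OpensMeasurableSpace E] (μ : Measure α) (hθ0 : 0 ≤ θ) (hθ1 : θ ≤ 1)
    {u₁ u₂ : α → E} {p₁ p₂ : α → ℝ} (hu₁ : Measurable u₁) (hu₂ : Measurable u₂)
    (hp₁ : Measurable p₁) (hp₂ : Measurable p₂) (hp₁pos : ∀ z, 0 < p₁ z)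
    (hp₂pos : ∀ z, 0 < p₂ z) :
    ∫⁻ z, ENNReal.ofReal (‖θ • u₁ z + (1 - θ) • u₂ z‖ ^ 2 / (θ * p₁ z + (1 - θ) * p₂ z)) ∂μ ≤
      ENNReal.ofReal θ * ∫⁻ z, ENNReal.ofReal (‖u₁ z‖ ^ 2 / p₁ z) ∂μ +
        ENNReal.ofReal (1 - θ) * ∫⁻ z, ENNReal.ofReal (‖u₂ z‖ ^ 2 / p₂ z) ∂μ := by
  refine lintegral_le_mul_add_mul ((hu₁.norm.pow_const 2).div hp₁).ennreal_ofReal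
    ((hu₂.norm.pow_const 2).div hp₂).ennreal_ofReal fun z => ?_
  have hθ1' : 0 ≤ 1 - θ := sub_nonneg.2 hθ1
  exact (ENNReal.ofReal_le_ofReal (norm_smul_add_smul_sq_div_le hθ0 hθ1' (hp₁pos z) (hp₂pos z)
    (u₁ z) (u₂ z))).trans (ENNReal.ofReal_mul_add_mul_le hθ0 hθ1' _ _)

theorem lintegral_sq_lintegral_div_convex {β : Type*} [MeasurableSpace β] (μ : Measure α)
    [SFinite μ] (ν : Measure β) (hθ0 : 0 ≤ θ) (hθ1 : θ ≤ 1) {k : α → β → ℝ}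
    (hk : Measurable fun p : α × β => k p.1 p.2) {q₁ q₂ : α → ℝ} {p₁ p₂ : β → ℝ}
    (hq₁ : Measurable q₁) (hq₂ : Measurable q₂) (hp₁ : Measurable p₁) (hp₂ : Measurable p₂)
    (hp₁pos : ∀ ζ, 0 < p₁ ζ) (hp₂pos : ∀ ζ, 0 < p₂ ζ) :
    ∫⁻ ζ, (∫⁻ z, ENNReal.ofReal (k z ζ * (θ * q₁ z + (1 - θ) * q₂ z)) ∂μ) ^ 2 /
        ENNReal.ofReal (θ * p₁ ζ + (1 - θ) * p₂ ζ) ∂ν ≤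
      ENNReal.ofReal θ * ∫⁻ ζ, (∫⁻ z, ENNReal.ofReal (k z ζ * q₁ z) ∂μ) ^ 2 /
          ENNReal.ofReal (p₁ ζ) ∂ν +
        ENNReal.ofReal (1 - θ) * ∫⁻ ζ, (∫⁻ z, ENNReal.ofReal (k z ζ * q₂ z) ∂μ) ^ 2 /
          ENNReal.ofReal (p₂ ζ) ∂ν := by
  have hθ1' : 0 ≤ 1 - θ := sub_nonneg.2 hθ1
  have hinner_meas : ∀ {q : α → ℝ}, Measurable q →
      Measurable fun ζ => ∫⁻ z, ENNReal.ofReal (k z ζ * q z) ∂μ := fun hq =>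
    (hk.mul (hq.comp measurable_fst)).ennreal_ofReal.lintegral_prod_left'
  have hinner : ∀ ζ, ∫⁻ z, ENNReal.ofReal (k z ζ * (θ * q₁ z + (1 - θ) * q₂ z)) ∂μ ≤
      ENNReal.ofReal θ * ∫⁻ z, ENNReal.ofReal (k z ζ * q₁ z) ∂μ +
        ENNReal.ofReal (1 - θ) * ∫⁻ z, ENNReal.ofReal (k z ζ * q₂ z) ∂μ := fun ζ =>
    lintegral_le_mul_add_mul
      ((hk.comp (measurable_id.prodMk measurable_const)).mul hq₁).ennreal_ofReal
      ((hk.comp (measurable_id.prodMk measurable_const)).mul hq₂).ennreal_ofReal fun z => by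
        rw [show k z ζ * (θ * q₁ z + (1 - θ) * q₂ z) =
          θ * (k z ζ * q₁ z) + (1 - θ) * (k z ζ * q₂ z) by ring]
        exact ENNReal.ofReal_mul_add_mul_le hθ0 hθ1' _ _
  refine lintegral_le_mul_add_mul (((hinner_meas hq₁).pow_const 2).div hp₁.ennreal_ofReal)
    (((hinner_meas hq₂).pow_const 2).div hp₂.ennreal_ofReal) fun ζ => ?_
  calc _ ≤ (ENNReal.ofReal θ * ∫⁻ z, ENNReal.ofReal (k z ζ * q₁ z) ∂μ +
        ENNReal.ofReal (1 - θ) * ∫⁻ z, ENNReal.ofReal (k z ζ * q₂ z) ∂μ) ^ 2 /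
          ENNReal.ofReal (θ * p₁ ζ + (1 - θ) * p₂ ζ) := by gcongr; exact hinner ζ
    _ ≤ _ := ENNReal.sq_add_div_add_le hθ0 hθ1 (hp₁pos ζ) (hp₂pos ζ) _ _

end Perspective

theorem measurable_node_of_measurable_succ {β : Type*} [MeasurableSpace β]
    {q : ∀ ℓ, Node d Z ℓ → β} {n : ℕ} (hq : ∀ ℓ, 1 ≤ ℓ → ℓ ≤ n → Measurable (q ℓ)) :
    ∀ ℓ ≤ n, Measurable (q ℓ)
  | 0, _ => fun _ _ => MeasurableSpace.measurableSet_top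
  | ℓ + 1, hℓ => hq (ℓ + 1) (Nat.le_add_left 1 ℓ) hℓ

theorem regTerm12_convex {Lp K : ℕ}
    (ρ₀ : ∀ ℓ, Measure (Z ℓ)) [∀ ℓ, SFinite (ρ₀ ℓ)]
    (w : ∀ ℓ : ℕ, Node d Z (ℓ + 1) → Node d Z ℓ → ℝ)
    (hw : ∀ ℓ, Measurable fun q : Node d Z (ℓ + 1) × Node d Z ℓ => w ℓ q.1 q.2)
    (lam : ℕ → ℝ) (lamu : ℝ) {θ : ℝ} (hθ0 : 0 ≤ θ) (hθ1 : θ ≤ 1)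
    {q₁ q₂ : ∀ ℓ, Node d Z ℓ → ℝ} (hq₁ : ∀ ℓ ≤ Lp + 1, Measurable (q₁ ℓ))
    (hq₂ : ∀ ℓ ≤ Lp + 1, Measurable (q₂ ℓ))
    (hq₁pos : ∀ ℓ z, 0 < q₁ ℓ z) (hq₂pos : ∀ ℓ z, 0 < q₂ ℓ z)
    {u₁ u₂ : Z Lp → EuclideanSpace ℝ (Fin K)} (hu₁ : Measurable u₁) (hu₂ : Measurable u₂) :
    regTerm12 Lp d K ρ₀ w lam lamu (fun ℓ z => θ * q₁ ℓ z + (1 - θ) * q₂ ℓ z)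
        (fun z => θ • u₁ z + (1 - θ) • u₂ z) ≤
      ENNReal.ofReal θ * regTerm12 Lp d K ρ₀ w lam lamu q₁ u₁ +
        ENNReal.ofReal (1 - θ) * regTerm12 Lp d K ρ₀ w lam lamu q₂ u₂ := by
  have hu := lintegral_sq_norm_div_convex (ρ₀ Lp) hθ0 hθ1 hu₁ hu₂ (hq₁ _ le_rfl)
    (hq₂ _ le_rfl) (hq₁pos (Lp + 1)) (hq₂pos (Lp + 1))
  have hle : ∀ t ∈ Finset.range (Lp + 1), t + 1 ≤ Lp + 1 := fun t ht => by
    simpa [Nat.lt_succ_iff] using ht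
  have hw' := fun t ht => lintegral_sq_lintegral_div_convex (ρ₀ t) (nodeMeasure d ρ₀ t) hθ0 hθ1
    (k := fun z ζ => |w t z ζ|) (hw t).abs (hq₁ _ (hle t ht)) (hq₂ _ (hle t ht))
    (hq₁ t (Nat.le_of_succ_le (hle t ht))) (hq₂ t (Nat.le_of_succ_le (hle t ht)))
    (hq₁pos t) (hq₂pos t)
  refine (add_le_add (mul_le_mul_right hu _)
    (Finset.sum_le_sum fun t ht => mul_le_mul_right (hw' t ht) _)).trans_eq ?_
  simp only [regTerm12, mul_add, Finset.mul_sum, Finset.sum_add_distrib,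
    mul_left_comm (ENNReal.ofReal θ), mul_left_comm (ENNReal.ofReal (1 - θ))]
  ring

theorem repopulated_objective_convex_l12_general
    (Lp d K : ℕ)
    (Z : ℕ → Type) [∀ ℓ, MeasurableSpace (Z ℓ)]
    (ρ₀ : ∀ ℓ, Measure (Z ℓ)) [∀ ℓ, IsProbabilityMeasure (ρ₀ ℓ)]
    (w : ∀ ℓ : ℕ, Node d Z (ℓ + 1) → Node d Z ℓ → ℝ)
    (hwmeas : ∀ ℓ, Measurable fun q : Node d Z (ℓ + 1) × Node d Z ℓ => w ℓ q.1 q.2)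
    (hact : ℕ → ℝ → ℝ)
    (Y : Type) [MeasurableSpace Y]
    (D : Measure ((Fin d → ℝ) × Y))
    (φ : EuclideanSpace ℝ (Fin K) → Y → ℝ)
    (hφ : ∀ y, ConvexOn ℝ Set.univ fun v => φ v y)
    (lam : ℕ → ℝ) (lamu : ℝ)
    -- two points of the convex set of tuples, and a convex combination
    (q₁ q₂ : ∀ ℓ, Node d Z ℓ → ℝ)
    (hq₁m : ∀ ℓ, 1 ≤ ℓ → ℓ ≤ Lp + 1 → Measurable (q₁ ℓ))
    (hq₂m : ∀ ℓ, 1 ≤ ℓ → ℓ ≤ Lp + 1 → Measurable (q₂ ℓ))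
    (hq₁p : ∀ ℓ (z : Node d Z ℓ), 0 < q₁ ℓ z) (hq₂p : ∀ ℓ (z : Node d Z ℓ), 0 < q₂ ℓ z)
    (u₁ u₂ : Z Lp → EuclideanSpace ℝ (Fin K))
    (hu₁m : Measurable u₁) (hu₂m : Measurable u₂)
    -- the loss term is well defined
    (hIi₁ : ∀ x : Fin d → ℝ,
      Integrable (fun z : Z Lp => ffun ρ₀ w hact x (Lp + 1) z • u₁ z) (ρ₀ Lp))
    (hIi₂ : ∀ x : Fin d → ℝ,
      Integrable (fun z : Z Lp => ffun ρ₀ w hact x (Lp + 1) z • u₂ z) (ρ₀ Lp))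
    (hIl₁ : Integrable (fun q : (Fin d → ℝ) × Y =>
      φ (∫ z, ffun ρ₀ w hact q.1 (Lp + 1) z • u₁ z ∂(ρ₀ Lp)) q.2) D)
    (hIl₂ : Integrable (fun q : (Fin d → ℝ) × Y =>
      φ (∫ z, ffun ρ₀ w hact q.1 (Lp + 1) z • u₂ z ∂(ρ₀ Lp)) q.2) D)
    (θ : ℝ) (hθ0 : 0 ≤ θ) (hθ1 : θ ≤ 1)
    -- the convex combination of the two tuples
    (qθ : ∀ ℓ, Node d Z ℓ → ℝ) (uθ : Z Lp → EuclideanSpace ℝ (Fin K))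
    (hqθ : ∀ ℓ (z : Node d Z ℓ), qθ ℓ z = θ * q₁ ℓ z + (1 - θ) * q₂ ℓ z)
    (huθ : ∀ z, uθ z = θ • u₁ z + (1 - θ) • u₂ z)
    (hIlθ : Integrable (fun q : (Fin d → ℝ) × Y =>
      φ (∫ z, ffun ρ₀ w hact q.1 (Lp + 1) z • uθ z ∂(ρ₀ Lp)) q.2) D) :
    ((lossTerm Lp d K ρ₀ w hact D φ uθ : ℝ) : EReal) +
        ((regTerm12 Lp d K ρ₀ w lam lamu qθ uθ : ℝ≥0∞) : EReal) ≤
      ((θ : ℝ) : EReal) *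
          (((lossTerm Lp d K ρ₀ w hact D φ u₁ : ℝ) : EReal) +
            ((regTerm12 Lp d K ρ₀ w lam lamu q₁ u₁ : ℝ≥0∞) : EReal)) +
        (((1 - θ : ℝ)) : EReal) *
          (((lossTerm Lp d K ρ₀ w hact D φ u₂ : ℝ) : EReal) +
            ((regTerm12 Lp d K ρ₀ w lam lamu q₂ u₂ : ℝ≥0∞) : EReal)) := by
  obtain rfl : qθ = fun ℓ z => θ * q₁ ℓ z + (1 - θ) * q₂ ℓ z := funext fun ℓ => funext (hqθ ℓ)
  obtain rfl : uθ = fun z => θ • u₁ z + (1 - θ) • u₂ z := funext huθ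
  exact EReal.coe_add_coe_ennreal_le_convex_combination hθ0 hθ1
    (integral_convexOn_integral_smul_le (ρ₀ Lp) D (fun x z => ffun ρ₀ w hact x (Lp + 1) z) hφ
      hθ0 hθ1 hIi₁ hIi₂ hIl₁ hIl₂ hIlθ)
    (regTerm12_convex ρ₀ w hwmeas lam lamu hθ0 hθ1 (measurable_node_of_measurable_succ hq₁m)
      (measurable_node_of_measurable_succ hq₂m) hq₁p hq₂p hu₁m hu₂m)

/-- **Convexity of the repopulated objective with `ℓ_{1,2}` regularization** (Theorem 5).
With a loss `φ` convex in its first argument, the repopulated objective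
`Q̆(p, ũ) = E φ(∫ ũ F dρ₀^{(L)}, y) + λ^{(u)} ∫ ‖ũ‖²/p^{(L)} + Σ_ℓ λ^{(ℓ)}
∫ (∫ |w^{(ℓ)}| p^{(ℓ)})² / p^{(ℓ−1)}` is jointly convex in the densities and the top
weights (the regularizer is valued in `[0,∞]`, so the inequality is stated in `EReal`). -/
theorem repopulated_objective_convex_l12
    (Lp d K : ℕ) (hd : 1 ≤ d) (hK : 1 ≤ K)
    (Z : ℕ → Type) [∀ ℓ, MeasurableSpace (Z ℓ)]
    (ρ₀ : ∀ ℓ, Measure (Z ℓ)) [∀ ℓ, IsProbabilityMeasure (ρ₀ ℓ)]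
    (w : ∀ ℓ : ℕ, Node d Z (ℓ + 1) → Node d Z ℓ → ℝ)
    (hwmeas : ∀ ℓ, Measurable fun q : Node d Z (ℓ + 1) × Node d Z ℓ => w ℓ q.1 q.2)
    (hact : ℕ → ℝ → ℝ)
    -- `F(z;x) = f^{(L)}(z;x)` is a fixed jointly measurable function
    (hF : Measurable fun pq : Z Lp × (Fin d → ℝ) => ffun ρ₀ w hact pq.2 (Lp + 1) pq.1)
    (Y : Type) [MeasurableSpace Y]
    (D : Measure ((Fin d → ℝ) × Y)) [IsProbabilityMeasure D]
    (φ : EuclideanSpace ℝ (Fin K) → Y → ℝ)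
    (hφ : ∀ y, ConvexOn ℝ Set.univ fun v => φ v y)
    (lam : ℕ → ℝ) (hlam : ∀ ℓ, 0 ≤ lam ℓ) (lamu : ℝ) (hlamu : 0 ≤ lamu)
    -- two points of the convex set of tuples, and a convex combination
    (q₁ q₂ : ∀ ℓ, Node d Z ℓ → ℝ)
    (hq₁0 : ∀ ζ : Node d Z 0, q₁ 0 ζ = 1) (hq₂0 : ∀ ζ : Node d Z 0, q₂ 0 ζ = 1)
    (hq₁m : ∀ ℓ, 1 ≤ ℓ → ℓ ≤ Lp + 1 → Measurable (q₁ ℓ))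
    (hq₂m : ∀ ℓ, 1 ≤ ℓ → ℓ ≤ Lp + 1 → Measurable (q₂ ℓ))
    (hq₁p : ∀ ℓ (z : Node d Z ℓ), 0 < q₁ ℓ z) (hq₂p : ∀ ℓ (z : Node d Z ℓ), 0 < q₂ ℓ z)
    (u₁ u₂ : Z Lp → EuclideanSpace ℝ (Fin K))
    (hu₁m : Measurable u₁) (hu₂m : Measurable u₂)
    -- the loss term is well defined
    (hIi₁ : ∀ x : Fin d → ℝ,
      Integrable (fun z : Z Lp => ffun ρ₀ w hact x (Lp + 1) z • u₁ z) (ρ₀ Lp))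
    (hIi₂ : ∀ x : Fin d → ℝ,
      Integrable (fun z : Z Lp => ffun ρ₀ w hact x (Lp + 1) z • u₂ z) (ρ₀ Lp))
    (hIl₁ : Integrable (fun q : (Fin d → ℝ) × Y =>
      φ (∫ z, ffun ρ₀ w hact q.1 (Lp + 1) z • u₁ z ∂(ρ₀ Lp)) q.2) D)
    (hIl₂ : Integrable (fun q : (Fin d → ℝ) × Y =>
      φ (∫ z, ffun ρ₀ w hact q.1 (Lp + 1) z • u₂ z ∂(ρ₀ Lp)) q.2) D)
    (θ : ℝ) (hθ0 : 0 ≤ θ) (hθ1 : θ ≤ 1)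
    -- the convex combination of the two tuples
    (qθ : ∀ ℓ, Node d Z ℓ → ℝ) (uθ : Z Lp → EuclideanSpace ℝ (Fin K))
    (hqθ : ∀ ℓ (z : Node d Z ℓ), qθ ℓ z = θ * q₁ ℓ z + (1 - θ) * q₂ ℓ z)
    (huθ : ∀ z, uθ z = θ • u₁ z + (1 - θ) • u₂ z)
    (hIlθ : Integrable (fun q : (Fin d → ℝ) × Y =>
      φ (∫ z, ffun ρ₀ w hact q.1 (Lp + 1) z • uθ z ∂(ρ₀ Lp)) q.2) D) :
    ((lossTerm Lp d K ρ₀ w hact D φ uθ : ℝ) : EReal) +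
        ((regTerm12 Lp d K ρ₀ w lam lamu qθ uθ : ℝ≥0∞) : EReal) ≤
      ((θ : ℝ) : EReal) *
          (((lossTerm Lp d K ρ₀ w hact D φ u₁ : ℝ) : EReal) +
            ((regTerm12 Lp d K ρ₀ w lam lamu q₁ u₁ : ℝ≥0∞) : EReal)) +
        (((1 - θ : ℝ)) : EReal) *
          (((lossTerm Lp d K ρ₀ w hact D φ u₂ : ℝ) : EReal) +
            ((regTerm12 Lp d K ρ₀ w lam lamu q₂ u₂ : ℝ≥0∞) : EReal)) :=
  repopulated_objective_convex_l12_general Lp d K Z ρ₀ w hwmeas hact Y D φ hφ lam lamu q₁ q₂ hq₁m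
    hq₂m hq₁p hq₂p u₁ u₂ hu₁m hu₂m hIi₁ hIi₂ hIl₁ hIl₂ θ hθ0 hθ1 qθ uθ hqθ huθ hIlθ
end

section
/- Joint convexity of x^a/y^b (Lemma 'property of convex', convexity part): Let a, b be real numbers with a − 1 ≥ b ≥ 0. Then the function f(x, y) = x^a / y^b is convex on the set [0, ∞) × (0, ∞) ⊆ ℝ²: for all (x₁,y₁), (x₂,y₂) in this set and θ ∈ [0,1], f(θx₁ + (1−θ)x₂, θy₁ + (1−θ)y₂) ≤ θ f(x₁,y₁) + (1−θ) f(x₂,y₂). -/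
open Real

/-- Young's inequality for the weights `1/a, b/a, (a-1-b)/a`, applied to `s^a/t^b, t, 1`,
whose weighted geometric mean is `s`. -/
theorem mul_le_rpow_div_rpow_add {a b s t : ℝ} (hab : b ≤ a - 1) (hb : 0 ≤ b) (hs : 0 ≤ s)
    (ht : 0 < t) : a * s ≤ s ^ a / t ^ b + b * t + (a - 1 - b) := by
  have ha : 0 < a := by linarith
  have hgeom : (s ^ a / t ^ b) ^ a⁻¹ * t ^ (b / a) * 1 ^ ((a - 1 - b) / a) = s := by
    rw [div_rpow (by positivity) (by positivity), rpow_rpow_inv hs ha.ne', ← rpow_mul ht.le,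
      one_rpow, mul_one, ← div_eq_mul_inv, div_mul_cancel₀ _ (by positivity)]
  have hamgm := geom_mean_le_arith_mean3_weighted (p₁ := s ^ a / t ^ b) (inv_nonneg.mpr ha.le)
    (by positivity) (div_nonneg (by linarith) ha.le) (by positivity) ht.le zero_le_one
    (by field_simp; ring : a⁻¹ + b / a + (a - 1 - b) / a = 1)
  rw [hgeom] at hamgm
  calc a * s ≤ a * (a⁻¹ * (s ^ a / t ^ b) + b / a * t + (a - 1 - b) / a * 1) := by gcongr
    _ = s ^ a / t ^ b + b * t + (a - 1 - b) := by field_simp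

theorem div_rpow_div_div_rpow {x y X Y : ℝ} (a b : ℝ) (hx : 0 ≤ x) (hy : 0 ≤ y) (hX : 0 ≤ X)
    (hY : 0 ≤ Y) : (x / X) ^ a / (y / Y) ^ b = x ^ a / y ^ b / (X ^ a / Y ^ b) := by
  rw [div_rpow hx hX, div_rpow hy hY, div_div_div_eq, div_div_div_eq, mul_comm (y ^ b)]

/-- **Joint convexity of `x^a / y^b`** (Lemma `property of convex`, convexity part).
For real `a, b` with `a − 1 ≥ b ≥ 0`, the function `(x, y) ↦ x^a / y^b` is convex on
`[0, ∞) × (0, ∞)`. -/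
theorem rpow_div_rpow_convex (a b : ℝ) (hab : b ≤ a - 1) (hb : 0 ≤ b) :
    ∀ x₁ y₁ x₂ y₂ θ : ℝ, 0 ≤ x₁ → 0 < y₁ → 0 ≤ x₂ → 0 < y₂ → 0 ≤ θ → θ ≤ 1 →
      (θ * x₁ + (1 - θ) * x₂) ^ a / (θ * y₁ + (1 - θ) * y₂) ^ b ≤
        θ * (x₁ ^ a / y₁ ^ b) + (1 - θ) * (x₂ ^ a / y₂ ^ b) := by
  intro x₁ y₁ x₂ y₂ θ hx₁ hy₁ hx₂ hy₂ hθ hθ1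
  have hθ' : 0 ≤ 1 - θ := by linarith
  set S := θ * x₁ + (1 - θ) * x₂
  set T := θ * y₁ + (1 - θ) * y₂ with hT
  have hTpos : 0 < T := by
    rcases hθ.eq_or_lt with hθ0 | hθpos
    · simpa [hT, ← hθ0] using hy₂
    · positivity
  rcases (show 0 ≤ S by positivity).eq_or_lt with hS0 | hSpos
  · rw [← hS0, zero_rpow (by linarith), zero_div]
    positivity
  -- Young's inequality at `(x/S, y/T)`, averaged with weights `θ, 1 - θ`, is `1 ≤ RHS / LHS`.
  have young : ∀ x y, 0 ≤ x → 0 < y →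
      a * (x / S) ≤ x ^ a / y ^ b / (S ^ a / T ^ b) + b * (y / T) + (a - 1 - b) := by
    intro x y hx hy
    rw [← div_rpow_div_div_rpow a b hx hy.le hSpos.le hTpos.le]
    exact mul_le_rpow_div_rpow_add hab hb (by positivity) (by positivity)
  have hxS : θ * (x₁ / S) + (1 - θ) * (x₂ / S) = 1 := by field_simp; rfl
  have hyT : θ * (y₁ / T) + (1 - θ) * (y₂ / T) = 1 := by field_simp; rfl
  have hLHS : 0 < S ^ a / T ^ b := by positivity
  rw [← one_le_div₀ hLHS]
  have young₁ := mul_le_mul_of_nonneg_left (young x₁ y₁ hx₁ hy₁) hθ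
  have young₂ := mul_le_mul_of_nonneg_left (young x₂ y₂ hx₂ hy₂) hθ'
  rw [add_div, mul_div_assoc, mul_div_assoc]
  linear_combination young₁ + young₂ - a * hxS + b * hyT
end

section
/- Strict joint convexity of x^a/y^b (Lemma 'property of convex', strict part): Let a, b be real numbers with a − 1 > b > 0. Then the function f(x, y) = x^a / y^b is strictly convex on (0, ∞) × (0, ∞) ⊆ ℝ²: for all distinct points (x₁,y₁) ≠ (x₂,y₂) in this set and θ ∈ (0,1), f(θx₁ + (1−θ)x₂, θy₁ + (1−θ)y₂) < θ f(x₁,y₁) + (1−θ) f(x₂,y₂). -/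
/-!
At every point `(u, v)` of the open quadrant, `f(x, y) = x^a / y^b` lies strictly above its
tangent plane away from `(u, v)`. After the substitution `s = x / u`, `t = y / v` this is the
inequality `a s ≤ s^a / t^b + b t + (a - 1 - b)`, which is weighted AM-GM for the three numbers
`s^a / t^b`, `t`, `1` with the positive weights `1/a`, `b/a`, `(a - 1 - b)/a`, strict unless
`s = t = 1`. Averaging the tangent-plane inequalities at the two endpoints, taken at their
convex combination, gives strict convexity.
-/

open Real

theorem Real.geom_mean_lt_arith_mean3_weighted_of_pos {w₁ w₂ w₃ p₁ p₂ p₃ : ℝ} (hw₁ : 0 < w₁)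
    (hw₂ : 0 < w₂) (hw₃ : 0 < w₃) (hp₁ : 0 ≤ p₁) (hp₂ : 0 ≤ p₂) (hp₃ : 0 ≤ p₃)
    (hw : w₁ + w₂ + w₃ = 1) (hp : p₁ ≠ p₃ ∨ p₂ ≠ p₃) :
    p₁ ^ w₁ * p₂ ^ w₂ * p₃ ^ w₃ < w₁ * p₁ + w₂ * p₂ + w₃ * p₃ := by
  have h := geom_mean_lt_arith_mean_weighted_iff_of_pos Finset.univ ![w₁, w₂, w₃] ![p₁, p₂, p₃]
  simp only [Fin.prod_univ_three, Fin.sum_univ_three, Finset.mem_univ, forall_const, true_and,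
    Fin.forall_fin_succ, Fin.exists_fin_succ, Fin.isValue, Matrix.cons_val, Fin.succ_zero_eq_one,
    Fin.succ_one_eq_two, IsEmpty.forall_iff, and_true, IsEmpty.exists_iff, or_false] at h
  exact (h ⟨hw₁, hw₂, hw₃⟩ hw ⟨hp₁, hp₂, hp₃⟩).2 (by tauto)

theorem one_add_mul_sub_lt_rpow_div_rpow {a b s t : ℝ} (hb : 0 < b) (hab : b < a - 1)
    (hs : 0 < s) (ht : 0 < t) (hst : (s, t) ≠ (1, 1)) :
    1 + a * (s - 1) - b * (t - 1) < s ^ a / t ^ b := by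
  have ha : 0 < a := by linarith
  have hp : s ^ a / t ^ b ≠ 1 ∨ t ≠ 1 := by
    by_contra! h
    obtain ⟨h₁, rfl⟩ := h
    rw [one_rpow, div_one, ← one_rpow a, rpow_left_inj hs.le zero_le_one ha.ne'] at h₁
    exact hst (by rw [h₁])
  have amgm := geom_mean_lt_arith_mean3_weighted_of_pos (inv_pos.2 ha) (div_pos hb ha)
    (div_pos (by linarith : 0 < a - 1 - b) ha) (by positivity) ht.le zero_le_one
    (by field_simp; ring) hp
  have hgeom : (s ^ a / t ^ b) ^ a⁻¹ * t ^ (b / a) * 1 ^ ((a - 1 - b) / a) = s := by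
    rw [div_rpow (by positivity) (by positivity), ← rpow_mul hs.le, ← rpow_mul ht.le,
      mul_inv_cancel₀ ha.ne', rpow_one, one_rpow, mul_one, ← div_eq_mul_inv]
    field_simp
  rw [hgeom] at amgm
  calc 1 + a * (s - 1) - b * (t - 1) = a * s - b * t - (a - 1 - b) := by ring
    _ < a * (a⁻¹ * (s ^ a / t ^ b) + b / a * t + (a - 1 - b) / a * 1) - b * t - (a - 1 - b) := by
      gcongr
    _ = s ^ a / t ^ b := by field_simp; ring

theorem rpow_div_rpow_tangent_lt {a b u v x y : ℝ} (hb : 0 < b) (hab : b < a - 1)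
    (hu : 0 < u) (hv : 0 < v) (hx : 0 < x) (hy : 0 < y) (hne : (x, y) ≠ (u, v)) :
    u ^ a / v ^ b * (1 + a * (x / u - 1) - b * (y / v - 1)) < x ^ a / y ^ b := by
  have hst : (x / u, y / v) ≠ (1, 1) := by
    rwa [Ne, Prod.mk.injEq, div_eq_one_iff_eq hu.ne', div_eq_one_iff_eq hv.ne', ← Prod.mk.injEq]
  calc u ^ a / v ^ b * (1 + a * (x / u - 1) - b * (y / v - 1))
      < u ^ a / v ^ b * ((x / u) ^ a / (y / v) ^ b) := by
        gcongr
        exact one_add_mul_sub_lt_rpow_div_rpow hb hab (by positivity) (by positivity) hst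
    _ = x ^ a / y ^ b := by
        rw [div_rpow hx.le hu.le, div_rpow hy.le hv.le]
        have : 0 < u ^ a := by positivity
        have : 0 < v ^ b := by positivity
        field_simp

/-- **Strict joint convexity of `x^a / y^b`** (Lemma `property of convex`, strict part).
For real `a, b` with `a − 1 > b > 0`, the function `(x, y) ↦ x^a / y^b` is strictly
convex on `(0, ∞) × (0, ∞)`. -/
theorem rpow_div_rpow_strictConvex (a b : ℝ) (hab : b < a - 1) (hb : 0 < b) :
    ∀ x₁ y₁ x₂ y₂ θ : ℝ, 0 < x₁ → 0 < y₁ → 0 < x₂ → 0 < y₂ →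
      (x₁, y₁) ≠ (x₂, y₂) → 0 < θ → θ < 1 →
      (θ * x₁ + (1 - θ) * x₂) ^ a / (θ * y₁ + (1 - θ) * y₂) ^ b <
        θ * (x₁ ^ a / y₁ ^ b) + (1 - θ) * (x₂ ^ a / y₂ ^ b) := by
  intro x₁ y₁ x₂ y₂ θ hx₁ hy₁ hx₂ hy₂ hne hθ₀ hθ₁
  set u := θ * x₁ + (1 - θ) * x₂
  set v := θ * y₁ + (1 - θ) * y₂
  have hθ : 0 < 1 - θ := by linarith
  have hu : 0 < u := by positivity
  have hv : 0 < v := by positivity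
  have hline : (u, v) = AffineMap.lineMap (x₂, y₂) (x₁, y₁) θ := by
    simp only [AffineMap.lineMap_apply_module, Prod.smul_mk, Prod.mk_add_mk, smul_eq_mul]
    ext <;> ring
  have hne₁ : (x₁, y₁) ≠ (u, v) := by
    rw [hline, ne_comm, Ne, AffineMap.lineMap_eq_right_iff]
    exact fun h => h.elim hne.symm hθ₁.ne
  have hne₂ : (x₂, y₂) ≠ (u, v) := by
    rw [hline, ne_comm, Ne, AffineMap.lineMap_eq_left_iff]
    exact fun h => h.elim hne.symm hθ₀.ne'
  have h₁ := rpow_div_rpow_tangent_lt hb hab hu hv hx₁ hy₁ hne₁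
  have h₂ := rpow_div_rpow_tangent_lt hb hab hu hv hx₂ hy₂ hne₂
  calc u ^ a / v ^ b
      = θ * (u ^ a / v ^ b * (1 + a * (x₁ / u - 1) - b * (y₁ / v - 1)))
        + (1 - θ) * (u ^ a / v ^ b * (1 + a * (x₂ / u - 1) - b * (y₂ / v - 1))) := by
        field_simp
        ring
    _ < θ * (x₁ ^ a / y₁ ^ b) + (1 - θ) * (x₂ ^ a / y₂ ^ b) := by gcongr
end

section
/- L¹ law of large numbers with truncation rate (Step 2 of the proof of Theorem 1): Let ε > 0, c > 0, and let ξ₁,…,ξ_m be i.i.d. random vectors in ℝ^K with E ξ₁ = 0 and E‖ξ₁‖^{1+ε} ≤ c. Then for every M > 0: E ‖ (1/m) Σ_{k=1}^{m} ξ_k ‖ ≤ M/√m + 2c/M^{ε}. In particular, with M = m^{1/(2(1+ε))}, E ‖ (1/m) Σ_{k=1}^{m} ξ_k ‖ ≤ (1 + 2c) · m^{−ε/(2(1+ε))}. -/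
/-!
Truncate each `ξ k` at level `M` and write `ξ k = (T ξ k - E T ξ k) + (R k - E R k)` with
`R k = ξ k - T ξ k`, which is possible because `E ξ k = 0`. The first parts are independent,
centred and bounded by `M`, hence orthogonal in `L²`, so `E‖∑ (T ξ k - E T ξ k)‖` is at most
`(∑ E‖T ξ k‖²) ^ (1/2) ≤ √m M`. The remainders satisfy `‖R k‖ ≤ ‖ξ k‖ ^ (1 + ε) / M ^ ε`, so
`E‖R k - E R k‖ ≤ 2 c / M ^ ε`. Dividing by `m` gives `M / √m + 2 c / M ^ ε`, and
`M = m ^ (1 / (2 (1 + ε)))` balances the two terms.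
-/

open MeasureTheory ProbabilityTheory
open scoped ENNReal BigOperators RealInnerProductSpace

section Truncation

variable {E : Type*} [NormedAddCommGroup E]

noncomputable def truncate (M : ℝ) (x : E) : E := if ‖x‖ ≤ M then x else 0

lemma norm_truncate_le {M : ℝ} (hM : 0 ≤ M) (x : E) : ‖truncate M x‖ ≤ M := by
  unfold truncate
  split_ifs with h
  · exact h
  · simpa using hM

lemma measurable_truncate [MeasurableSpace E] [OpensMeasurableSpace E] (M : ℝ) :
    Measurable (truncate (E := E) M) :=
  Measurable.ite (measurableSet_le measurable_norm measurable_const) measurable_id measurable_const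

lemma norm_sub_truncate_le {M ε : ℝ} (hM : 0 < M) (hε : 0 ≤ ε) (x : E) :
    ‖x - truncate M x‖ ≤ ‖x‖ ^ (1 + ε) / M ^ ε := by
  unfold truncate
  split_ifs with h
  · simp only [sub_self, norm_zero]
    positivity
  · push Not at h
    rw [sub_zero, le_div_iff₀ (by positivity), Real.rpow_add (hM.trans h), Real.rpow_one]
    exact mul_le_mul_of_nonneg_left (Real.rpow_le_rpow hM.le h.le hε) (norm_nonneg _)

variable {Ω : Type*} [MeasurableSpace Ω] {μ : Measure Ω} [MeasurableSpace E] [BorelSpace E]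
  [SecondCountableTopology E]

lemma integral_norm_sub_truncate_le {X : Ω → E} (hX : AEMeasurable X μ) {M ε c : ℝ} (hM : 0 < M)
    (hε : 0 ≤ ε) (hc : 0 ≤ c) (hmom : ∫⁻ ω, ENNReal.ofReal (‖X ω‖ ^ (1 + ε)) ∂μ ≤ ENNReal.ofReal c) :
    ∫ ω, ‖X ω - truncate M (X ω)‖ ∂μ ≤ c / M ^ ε := by
  have hmeas : AEStronglyMeasurable (fun ω => ‖X ω - truncate M (X ω)‖) μ :=
    (hX.sub ((measurable_truncate M).comp_aemeasurable hX)).norm.aestronglyMeasurable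
  rw [integral_eq_lintegral_of_nonneg_ae (ae_of_all _ fun ω => norm_nonneg _) hmeas]
  refine ENNReal.toReal_le_of_le_ofReal (by positivity) ?_
  calc ∫⁻ ω, ENNReal.ofReal ‖X ω - truncate M (X ω)‖ ∂μ
      ≤ ∫⁻ ω, ENNReal.ofReal (‖X ω‖ ^ (1 + ε)) * ENNReal.ofReal ((M ^ ε)⁻¹) ∂μ :=
        lintegral_mono fun ω => by
          rw [← ENNReal.ofReal_mul (by positivity), ← div_eq_mul_inv]
          exact ENNReal.ofReal_le_ofReal (norm_sub_truncate_le hM hε _)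
    _ = (∫⁻ ω, ENNReal.ofReal (‖X ω‖ ^ (1 + ε)) ∂μ) * ENNReal.ofReal ((M ^ ε)⁻¹) :=
        lintegral_mul_const' _ _ ENNReal.ofReal_ne_top
    _ ≤ ENNReal.ofReal c * ENNReal.ofReal ((M ^ ε)⁻¹) := by gcongr
    _ = ENNReal.ofReal (c / M ^ ε) := by rw [← ENNReal.ofReal_mul hc, div_eq_mul_inv]

end Truncation

section Moments

variable {Ω E : Type*} [MeasurableSpace Ω] {μ : Measure Ω} [NormedAddCommGroup E]

lemma integral_norm_le_sqrt_integral_norm_sq [IsProbabilityMeasure μ] {Y : Ω → E}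
    (hY : MemLp Y 2 μ) : ∫ ω, ‖Y ω‖ ∂μ ≤ √(∫ ω, ‖Y ω‖ ^ 2 ∂μ) := by
  have hvar := variance_eq_sub hY.norm
  refine Real.le_sqrt_of_sq_le ?_
  have := variance_nonneg (fun ω => ‖Y ω‖) μ
  simp only [Pi.pow_apply] at hvar
  linarith

lemma integral_norm_sub_integral_le [NormedSpace ℝ E] [IsProbabilityMeasure μ] {Y : Ω → E}
    (hY : Integrable Y μ) :
    ∫ ω, ‖Y ω - ∫ ω', Y ω' ∂μ‖ ∂μ ≤ 2 * ∫ ω, ‖Y ω‖ ∂μ := by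
  calc ∫ ω, ‖Y ω - ∫ ω', Y ω' ∂μ‖ ∂μ ≤ ∫ ω, (‖Y ω‖ + ‖∫ ω', Y ω' ∂μ‖) ∂μ :=
        integral_mono (hY.sub (integrable_const _)).norm (hY.norm.add (integrable_const _))
          fun ω => norm_sub_le _ _
    _ = ∫ ω, ‖Y ω‖ ∂μ + ‖∫ ω, Y ω ∂μ‖ := by
        rw [integral_add hY.norm (integrable_const _)]
        simp
    _ ≤ 2 * ∫ ω, ‖Y ω‖ ∂μ := by
        linarith [norm_integral_le_integral_norm (μ := μ) Y]

variable [InnerProductSpace ℝ E] [CompleteSpace E]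

lemma integral_norm_sub_integral_sq [IsProbabilityMeasure μ] {Y : Ω → E} (hY : MemLp Y 2 μ) :
    ∫ ω, ‖Y ω - ∫ ω', Y ω' ∂μ‖ ^ 2 ∂μ = ∫ ω, ‖Y ω‖ ^ 2 ∂μ - ‖∫ ω, Y ω ∂μ‖ ^ 2 := by
  set a := ∫ ω, Y ω ∂μ
  have hY1 : Integrable Y μ := hY.integrable one_le_two
  have hsq : Integrable (fun ω => ‖Y ω‖ ^ 2) μ := hY.integrable_norm_pow two_ne_zero
  have hinner : Integrable (fun ω => 2 * ⟪a, Y ω⟫) μ := (hY1.const_inner a).const_mul 2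
  have hsub : Integrable (fun ω => ‖Y ω‖ ^ 2 - 2 * ⟪a, Y ω⟫) μ := hsq.sub hinner
  simp_rw [norm_sub_sq_real, real_inner_comm a]
  rw [integral_add hsub (integrable_const _), integral_sub hsq hinner,
    integral_const_mul, integral_inner hY1, real_inner_self_eq_norm_sq]
  simp only [integral_const, probReal_univ, one_smul]
  ring

variable [MeasurableSpace E] [BorelSpace E]

lemma ProbabilityTheory.IndepFun.integral_inner_eq_zero {X Y : Ω → E} (hXY : IndepFun X Y μ)
    (hX : Integrable X μ) (hY : Integrable Y μ) (hX0 : ∫ ω, X ω ∂μ = 0) :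
    ∫ ω, ⟪X ω, Y ω⟫ ∂μ = 0 := by
  have h := hXY.integral_bilin hX hY (innerSL ℝ)
  rwa [hX0, map_zero, zero_apply] at h

lemma integral_norm_sum_sq_eq_sum [IsFiniteMeasure μ] {ι : Type*} [Fintype ι] {X : ι → Ω → E}
    (hindep : Pairwise fun i j => IndepFun (X i) (X j) μ) (hX : ∀ i, MemLp (X i) 2 μ)
    (hmean : ∀ i, ∫ ω, X i ω ∂μ = 0) :
    ∫ ω, ‖∑ i, X i ω‖ ^ 2 ∂μ = ∑ i, ∫ ω, ‖X i ω‖ ^ 2 ∂μ := by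
  have hint : ∀ i j, Integrable (fun ω => ⟪X i ω, X j ω⟫) μ := by
    intro i j
    by_cases hij : i = j
    · subst hij
      simpa only [real_inner_self_eq_norm_sq] using (hX i).integrable_norm_pow two_ne_zero
    · exact (hindep hij).integrable_bilin ((hX i).integrable one_le_two)
        ((hX j).integrable one_le_two) (innerSL ℝ)
  calc ∫ ω, ‖∑ i, X i ω‖ ^ 2 ∂μ = ∫ ω, ∑ i, ∑ j, ⟪X i ω, X j ω⟫ ∂μ := by
        simp_rw [← real_inner_self_eq_norm_sq, sum_inner, inner_sum]
    _ = ∑ i, ∑ j, ∫ ω, ⟪X i ω, X j ω⟫ ∂μ := by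
        rw [integral_finsetSum _ fun i _ => integrable_finsetSum _ fun j _ => hint i j]
        exact Finset.sum_congr rfl fun i _ => integral_finsetSum _ fun j _ => hint i j
    _ = ∑ i, ∫ ω, ‖X i ω‖ ^ 2 ∂μ := by
        refine Finset.sum_congr rfl fun i _ => ?_
        rw [Finset.sum_eq_single_of_mem i (Finset.mem_univ i) fun j _ hji =>
          (hindep hji.symm).integral_inner_eq_zero ((hX i).integrable one_le_two)
            ((hX j).integrable one_le_two) (hmean i)]
        simp_rw [real_inner_self_eq_norm_sq]

end Moments

section LawOfLargeNumbers

variable {Ω E : Type*} [MeasurableSpace Ω] {μ : Measure Ω} [IsProbabilityMeasure μ]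
  [NormedAddCommGroup E] [InnerProductSpace ℝ E] [CompleteSpace E]
  [MeasurableSpace E] [BorelSpace E] {ι : Type*} [Fintype ι]

lemma integral_norm_sum_sub_integral_le {Y : ι → Ω → E}
    (hindep : Pairwise fun i j => IndepFun (Y i) (Y j) μ) (hY : ∀ i, AEStronglyMeasurable (Y i) μ)
    {M : ℝ} (hM : 0 ≤ M) (hbound : ∀ i, ∀ᵐ ω ∂μ, ‖Y i ω‖ ≤ M) :
    ∫ ω, ‖∑ i, (Y i ω - ∫ ω', Y i ω' ∂μ)‖ ∂μ ≤ √(Fintype.card ι) * M := by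
  set η : ι → Ω → E := fun i ω => Y i ω - ∫ ω', Y i ω' ∂μ
  have hY2 : ∀ i, MemLp (Y i) 2 μ := fun i => MemLp.of_bound (hY i) M (hbound i)
  have hη2 : ∀ i, MemLp (η i) 2 μ := fun i => (hY2 i).sub (memLp_const _)
  have hηindep : Pairwise fun i j => IndepFun (η i) (η j) μ := fun i j hij =>
    (hindep hij).comp (measurable_sub_const _) (measurable_sub_const _)
  have hηmean : ∀ i, ∫ ω, η i ω ∂μ = 0 := fun i => by
    simp [η, integral_sub ((hY2 i).integrable one_le_two) (integrable_const _)]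
  have hηsq : ∀ i, ∫ ω, ‖η i ω‖ ^ 2 ∂μ ≤ M ^ 2 := fun i =>
    calc ∫ ω, ‖η i ω‖ ^ 2 ∂μ ≤ ∫ ω, ‖Y i ω‖ ^ 2 ∂μ :=
          (integral_norm_sub_integral_sq (hY2 i)).trans_le (sub_le_self _ (sq_nonneg _))
      _ ≤ M ^ 2 := by
          refine (integral_mono_ae ((hY2 i).integrable_norm_pow two_ne_zero) (integrable_const _)
            ((hbound i).mono fun ω h => pow_le_pow_left₀ (norm_nonneg _) h 2)).trans ?_
          simp
  calc ∫ ω, ‖∑ i, η i ω‖ ∂μ ≤ √(∫ ω, ‖∑ i, η i ω‖ ^ 2 ∂μ) :=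
        integral_norm_le_sqrt_integral_norm_sq (memLp_finsetSum _ fun i _ => hη2 i)
    _ = √(∑ i, ∫ ω, ‖η i ω‖ ^ 2 ∂μ) := by
        rw [integral_norm_sum_sq_eq_sum hηindep hη2 hηmean]
    _ ≤ √(Fintype.card ι * M ^ 2) := by
        gcongr
        simpa using Finset.sum_le_sum fun i (_ : i ∈ Finset.univ) => hηsq i
    _ = √(Fintype.card ι) * M := by
        rw [Real.sqrt_mul (Nat.cast_nonneg _), Real.sqrt_sq hM]

lemma integral_norm_sum_le_of_moment [SecondCountableTopology E] {ξ : ι → Ω → E}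
    (hindep : Pairwise fun i j => IndepFun (ξ i) (ξ j) μ) (hint : ∀ i, Integrable (ξ i) μ)
    (hmean : ∀ i, ∫ ω, ξ i ω ∂μ = 0) {ε c M : ℝ} (hε : 0 ≤ ε) (hc : 0 ≤ c) (hM : 0 < M)
    (hmom : ∀ i, ∫⁻ ω, ENNReal.ofReal (‖ξ i ω‖ ^ (1 + ε)) ∂μ ≤ ENNReal.ofReal c) :
    ∫ ω, ‖∑ i, ξ i ω‖ ∂μ ≤ √(Fintype.card ι) * M + Fintype.card ι * (2 * c / M ^ ε) := by
  set Y : ι → Ω → E := fun i ω => truncate M (ξ i ω)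
  set Z : ι → Ω → E := fun i ω => ξ i ω - Y i ω
  set A : Ω → E := fun ω => ∑ i, (Y i ω - ∫ ω', Y i ω' ∂μ)
  set B : Ω → E := fun ω => ∑ i, (Z i ω - ∫ ω', Z i ω' ∂μ)
  have hY : ∀ i, AEStronglyMeasurable (Y i) μ := fun i =>
    ((measurable_truncate M).comp_aemeasurable (hint i).aemeasurable).aestronglyMeasurable
  have hYbound : ∀ i, ∀ᵐ ω ∂μ, ‖Y i ω‖ ≤ M := fun i => ae_of_all _ fun ω => norm_truncate_le hM.le _
  have hYint : ∀ i, Integrable (Y i) μ := fun i => Integrable.of_bound (hY i) M (hYbound i)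
  have hZint : ∀ i, Integrable (Z i) μ := fun i => (hint i).sub (hYint i)
  have hAint : Integrable A μ :=
    integrable_finsetSum _ fun i _ => (hYint i).sub (integrable_const _)
  have hBint : Integrable B μ :=
    integrable_finsetSum _ fun i _ => (hZint i).sub (integrable_const _)
  have hsplit : ∀ ω, ∑ i, ξ i ω = A ω + B ω := fun ω => by
    rw [← Finset.sum_add_distrib]
    refine Finset.sum_congr rfl fun i _ => ?_
    have hYZ : ∫ ω, Y i ω ∂μ + ∫ ω, Z i ω ∂μ = 0 := by
      rw [← integral_add (hYint i) (hZint i)]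
      simpa [Z] using hmean i
    rw [sub_add_sub_comm, add_sub_cancel, hYZ, sub_zero]
  have hA : ∫ ω, ‖A ω‖ ∂μ ≤ √(Fintype.card ι) * M :=
    integral_norm_sum_sub_integral_le
      (fun i j hij => (hindep hij).comp (measurable_truncate M) (measurable_truncate M))
      hY hM.le hYbound
  have hB : ∫ ω, ‖B ω‖ ∂μ ≤ Fintype.card ι * (2 * c / M ^ ε) :=
    calc ∫ ω, ‖B ω‖ ∂μ ≤ ∫ ω, ∑ i, ‖Z i ω - ∫ ω', Z i ω' ∂μ‖ ∂μ :=
          integral_mono hBint.norm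
            (integrable_finsetSum _ fun i _ => ((hZint i).sub (integrable_const _)).norm)
            fun ω => norm_sum_le _ _
      _ = ∑ i, ∫ ω, ‖Z i ω - ∫ ω', Z i ω' ∂μ‖ ∂μ :=
          integral_finsetSum _ fun i _ => ((hZint i).sub (integrable_const _)).norm
      _ ≤ ∑ _i : ι, 2 * c / M ^ ε := Finset.sum_le_sum fun i _ => by
          have htail := integral_norm_sub_truncate_le (hint i).aemeasurable hM hε hc (hmom i)
          have hcenter := integral_norm_sub_integral_le (hZint i)
          rw [mul_div_assoc]
          linarith
      _ = Fintype.card ι * (2 * c / M ^ ε) := by simp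
  calc ∫ ω, ‖∑ i, ξ i ω‖ ∂μ ≤ ∫ ω, (‖A ω‖ + ‖B ω‖) ∂μ :=
        integral_mono (integrable_finsetSum _ fun i _ => hint i).norm
          (hAint.norm.add hBint.norm) fun ω => by rw [hsplit ω]; exact norm_add_le _ _
    _ = ∫ ω, ‖A ω‖ ∂μ + ∫ ω, ‖B ω‖ ∂μ := integral_add hAint.norm hBint.norm
    _ ≤ _ := add_le_add hA hB

lemma integral_norm_average_le_of_moment [SecondCountableTopology E] {ξ : ι → Ω → E}
    (hindep : Pairwise fun i j => IndepFun (ξ i) (ξ j) μ) (hint : ∀ i, Integrable (ξ i) μ)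
    (hmean : ∀ i, ∫ ω, ξ i ω ∂μ = 0) {ε c M : ℝ} (hε : 0 ≤ ε) (hc : 0 ≤ c) (hM : 0 < M)
    (hmom : ∀ i, ∫⁻ ω, ENNReal.ofReal (‖ξ i ω‖ ^ (1 + ε)) ∂μ ≤ ENNReal.ofReal c) :
    ∫ ω, ‖(Fintype.card ι : ℝ)⁻¹ • ∑ i, ξ i ω‖ ∂μ ≤
      M / √(Fintype.card ι) + 2 * c / M ^ ε := by
  set n : ℝ := (Fintype.card ι : ℝ)
  have hn : 0 ≤ n := Nat.cast_nonneg _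
  calc ∫ ω, ‖n⁻¹ • ∑ i, ξ i ω‖ ∂μ = n⁻¹ * ∫ ω, ‖∑ i, ξ i ω‖ ∂μ := by
        simp_rw [norm_smul, norm_inv, Real.norm_of_nonneg hn]
        exact integral_const_mul _ _
    _ ≤ n⁻¹ * (√n * M + n * (2 * c / M ^ ε)) := by
        gcongr
        exact integral_norm_sum_le_of_moment hindep hint hmean hε hc hM hmom
    _ = M / √n + n⁻¹ * n * (2 * c / M ^ ε) := by
        rw [div_eq_mul_one_div M, ← Real.sqrt_div_self']
        ring
    _ ≤ M / √n + 2 * c / M ^ ε := by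
        gcongr
        exact mul_le_of_le_one_left (by positivity) inv_mul_le_one

end LawOfLargeNumbers

lemma div_sqrt_add_div_rpow_eq_of_eq_rpow {x ε M : ℝ} (hx : 0 < x) (hε : 1 + ε ≠ 0) (c : ℝ)
    (hM : M = x ^ (2 * (1 + ε))⁻¹) :
    M / √x + c / M ^ ε = (1 + c) * x ^ (-(ε / (2 * (1 + ε)))) := by
  have hexp₁ : (2 * (1 + ε))⁻¹ - 1 / 2 = -(ε / (2 * (1 + ε))) := by
    field_simp
    ring
  have hexp₂ : (2 * (1 + ε))⁻¹ * ε = ε / (2 * (1 + ε)) := by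
    field_simp
  rw [hM, Real.sqrt_eq_rpow, ← Real.rpow_sub hx, hexp₁, ← Real.rpow_mul hx.le, hexp₂,
    div_eq_mul_inv c, ← Real.rpow_neg hx.le]
  ring

theorem l1_lln_with_truncation_rate_general
    {Ω : Type*} [MeasurableSpace Ω] (P : Measure Ω) [IsProbabilityMeasure P]
    (K m : ℕ) (hm : 1 ≤ m) (ε c : ℝ) (hε : 0 < ε) (hc : 0 < c)
    (ξ : Fin m → Ω → EuclideanSpace ℝ (Fin K))
    (hindep : iIndepFun ξ P)
    (hint : ∀ k, Integrable (ξ k) P)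
    (hmean : ∀ k, ∫ ω, ξ k ω ∂P = 0)
    (hmom : ∀ k, ∫⁻ ω, ENNReal.ofReal (‖ξ k ω‖ ^ (1 + ε)) ∂P ≤ ENNReal.ofReal c) :
    (∀ M : ℝ, 0 < M →
      ∫ ω, ‖(m : ℝ)⁻¹ • ∑ k, ξ k ω‖ ∂P ≤ M / Real.sqrt m + 2 * c / M ^ ε) ∧
    ∫ ω, ‖(m : ℝ)⁻¹ • ∑ k, ξ k ω‖ ∂P ≤
      (1 + 2 * c) * (m : ℝ) ^ (-(ε / (2 * (1 + ε)))) := by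
  have hbound : ∀ M : ℝ, 0 < M →
      ∫ ω, ‖(m : ℝ)⁻¹ • ∑ k, ξ k ω‖ ∂P ≤ M / Real.sqrt m + 2 * c / M ^ ε := fun M hM => by
    simpa using integral_norm_average_le_of_moment (fun k l hkl => hindep.indepFun hkl) hint hmean
      hε.le hc.le hM hmom
  have hm_pos : (0 : ℝ) < m := by exact_mod_cast hm
  refine ⟨hbound, ?_⟩
  calc _ ≤ _ := hbound _ (Real.rpow_pos_of_pos hm_pos (2 * (1 + ε))⁻¹)
    _ = _ := div_sqrt_add_div_rpow_eq_of_eq_rpow hm_pos (by linarith) _ rfl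

/-- **L¹ law of large numbers with truncation rate** (Step 2 of the proof of Theorem 1).
If `ξ₁, …, ξ_m` are i.i.d. mean-zero random vectors in `ℝ^K` with
`E‖ξ₁‖^{1+ε} ≤ c`, then `E‖(1/m) Σ ξ_k‖ ≤ M/√m + 2c/M^ε` for every `M > 0`; in
particular, taking `M = m^{1/(2(1+ε))}` yields `E‖(1/m) Σ ξ_k‖ ≤ (1+2c) m^{-ε/(2(1+ε))}`. -/
theorem l1_lln_with_truncation_rate
    {Ω : Type*} [MeasurableSpace Ω] (P : Measure Ω) [IsProbabilityMeasure P]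
    (K m : ℕ) (hm : 1 ≤ m) (ε c : ℝ) (hε : 0 < ε) (hc : 0 < c)
    (ξ : Fin m → Ω → EuclideanSpace ℝ (Fin K))
    (hmeas : ∀ k, Measurable (ξ k))
    (hindep : iIndepFun ξ P)
    (hident : ∀ k l, IdentDistrib (ξ k) (ξ l) P P)
    (hint : ∀ k, Integrable (ξ k) P)
    (hmean : ∀ k, ∫ ω, ξ k ω ∂P = 0)
    (hmom : ∀ k, ∫⁻ ω, ENNReal.ofReal (‖ξ k ω‖ ^ (1 + ε)) ∂P ≤ ENNReal.ofReal c) :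
    (∀ M : ℝ, 0 < M →
      ∫ ω, ‖(m : ℝ)⁻¹ • ∑ k, ξ k ω‖ ∂P ≤ M / Real.sqrt m + 2 * c / M ^ ε) ∧
    ∫ ω, ‖(m : ℝ)⁻¹ • ∑ k, ξ k ω‖ ∂P ≤
      (1 + 2 * c) * (m : ℝ) ^ (-(ε / (2 * (1 + ε)))) :=
  l1_lln_with_truncation_rate_general P K m hm ε c hε hc ξ hindep hint hmean hmom
end
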